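/- Let G : R^n → R be μ-strongly convex (μ > 0) and continuous, let W ⊆ R^n be a closed convex set with nonempty relative interior given by W = {z : h_m(z) ≤ 0, m=1,…,M} with each h_m convex continuous, and suppose relint(W) contains points with h_m strictly negative for all m. For ℓ > 0 let g_ℓ(z) = ∑_m ln(1+e^{ℓ h_m(z)}), let z* be the unique minimizer of G over W, and let z_ℓ be the unique minimizer of G + g_ℓ over R^n. Assume z_ℓ converges to some limit ẑ as ℓ → ∞. Then ẑ = z*. -/

import Mathlib

/-!
`log (1 + exp (ℓ h))` is nonnegative, dominates `ℓ h`, and tends to `0` as `ℓ → ∞` where `h < 0`.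
Comparing `z_ℓ` with a Slater point `z₀` gives `ℓ h_m (z_ℓ) ≤ G z₀ + o(1) - G (z_ℓ)`; dividing
by `ℓ` shows `h_m ẑ ≤ 0`. Comparing with a strictly feasible `p` gives `G ẑ ≤ G p`, and by
convexity the strictly feasible points are dense in `W` (they fill the open segment from any
feasible point to `z₀`). So `ẑ` minimizes `G` over `W`, where strict convexity makes the
minimizer unique.
-/

open Filter Topology Set

namespace Real

lemma le_log_one_add_exp (x : ℝ) : x ≤ log (1 + exp x) := by
  calc x = log (exp x) := (log_exp x).symm
    _ ≤ log (1 + exp x) := log_le_log (exp_pos x) (by linarith)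

lemma log_one_add_exp_nonneg (x : ℝ) : 0 ≤ log (1 + exp x) :=
  log_nonneg (by linarith [exp_pos x])

lemma tendsto_log_one_add_exp_atBot : Tendsto (fun x => log (1 + exp x)) atBot (𝓝 0) := by
  have hcont : ContinuousAt (fun y : ℝ => log (1 + y)) 0 :=
    (continuousAt_log (by norm_num)).comp (continuousAt_const.add continuousAt_id)
  simpa [Function.comp_def] using hcont.tendsto.comp tendsto_exp_atBot

end Real

noncomputable def softplusPenalty {ι E : Type*} [Fintype ι] (h : ι → E → ℝ)
    (ℓ : ℝ) (z : E) : ℝ :=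
  ∑ m, Real.log (1 + Real.exp (ℓ * h m z))

section SoftplusPenalty

variable {ι E : Type*} [Fintype ι] {h : ι → E → ℝ}

lemma softplusPenalty_nonneg (ℓ : ℝ) (z : E) : 0 ≤ softplusPenalty h ℓ z :=
  Finset.sum_nonneg fun _ _ => Real.log_one_add_exp_nonneg _

lemma mul_le_softplusPenalty (ℓ : ℝ) (z : E) (m : ι) :
    ℓ * h m z ≤ softplusPenalty h ℓ z :=
  (Real.le_log_one_add_exp _).trans <|
    Finset.single_le_sum (f := fun i => Real.log (1 + Real.exp (ℓ * h i z)))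
      (fun _ _ => Real.log_one_add_exp_nonneg _) (Finset.mem_univ m)

lemma tendsto_softplusPenalty_of_forall_neg {z : E} (hz : ∀ m, h m z < 0) :
    Tendsto (fun ℓ => softplusPenalty h ℓ z) atTop (𝓝 0) := by
  simpa [softplusPenalty] using tendsto_finsetSum Finset.univ fun m _ =>
    Real.tendsto_log_one_add_exp_atBot.comp (tendsto_id.atTop_mul_const_of_neg (hz m))

end SoftplusPenalty

lemma le_of_tendsto_of_eventually_add_penalty_le {α X : Type*} [TopologicalSpace X]
    {l : Filter α} [l.NeBot] {G : X → ℝ} (hG : Continuous G) {P : α → X → ℝ}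
    (hP : ∀ a x, 0 ≤ P a x) {z : α → X} {zhat : X} (hz : Tendsto z l (𝓝 zhat)) {p : X}
    (hmin : ∀ᶠ a in l, G (z a) + P a (z a) ≤ G p + P a p)
    (hp : Tendsto (fun a => P a p) l (𝓝 0)) : G zhat ≤ G p := by
  have hbound : ∀ᶠ a in l, G (z a) ≤ G p + P a p :=
    hmin.mono fun a ha => by linarith [hP a (z a)]
  simpa using
    le_of_tendsto_of_tendsto ((hG.tendsto zhat).comp hz) (tendsto_const_nhds.add hp) hbound

lemma mem_closure_setOf_forall_neg {ι E : Type*} [AddCommGroup E] [Module ℝ E]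
    [TopologicalSpace E] [ContinuousAdd E] [ContinuousSMul ℝ E] {h : ι → E → ℝ}
    (hh : ∀ m, ConvexOn ℝ univ (h m)) {z₀ z : E} (hz₀ : ∀ m, h m z₀ < 0)
    (hz : ∀ m, h m z ≤ 0) : z ∈ closure {x | ∀ m, h m x < 0} := by
  refine closure_mono ?_ (segment_subset_closure_openSegment (left_mem_segment ℝ z z₀))
  rintro _ ⟨a, b, ha, hb, hab, rfl⟩ m
  calc h m (a • z + b • z₀) ≤ a * h m z + b * h m z₀ :=
        (hh m).2 (mem_univ z) (mem_univ z₀) ha.le hb.le hab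
    _ < 0 := by nlinarith [hz m, hz₀ m]

lemma convex_setOf_forall_nonpos {ι E : Type*} [AddCommGroup E] [Module ℝ E]
    {h : ι → E → ℝ} (hh : ∀ m, ConvexOn ℝ univ (h m)) :
    Convex ℝ {x | ∀ m, h m x ≤ 0} := by
  simpa [ofPred_forall] using convex_iInter fun m => (hh m).convex_le 0

lemma nonpos_of_tendsto_softplus_minimizers {ι X : Type*} [Fintype ι] [TopologicalSpace X]
    {G : X → ℝ} {h : ι → X → ℝ} {z : ℝ → X} {zhat : X} (hG : Continuous G)
    (hh : ∀ m, Continuous (h m))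
    (hz : Tendsto z atTop (𝓝 zhat)) {p : X} (hp : ∀ m, h m p < 0)
    (hmin : ∀ᶠ ℓ in atTop,
      G (z ℓ) + softplusPenalty h ℓ (z ℓ) ≤ G p + softplusPenalty h ℓ p)
    (m : ι) : h m zhat ≤ 0 := by
  have hslack :
      Tendsto (fun ℓ => (G p + softplusPenalty h ℓ p - G (z ℓ)) / ℓ) atTop (𝓝 0) :=
    ((tendsto_const_nhds.add (tendsto_softplusPenalty_of_forall_neg hp)).sub
      ((hG.tendsto zhat).comp hz)).div_atTop tendsto_id
  refine le_of_tendsto_of_tendsto ((hh m).continuousAt.tendsto.comp hz) hslack ?_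
  filter_upwards [hmin, eventually_gt_atTop 0] with ℓ hℓmin hℓ
  rw [Function.comp_apply, le_div_iff₀ hℓ]
  linarith [mul_le_softplusPenalty (h := h) ℓ (z ℓ) m]

lemma le_of_tendsto_softplus_minimizers {ι E : Type*} [Fintype ι] [AddCommGroup E]
    [Module ℝ E] [TopologicalSpace E] [ContinuousAdd E] [ContinuousSMul ℝ E]
    {G : E → ℝ} {h : ι → E → ℝ} {z : ℝ → E} {zhat : E} (hG : Continuous G)
    (hh : ∀ m, ConvexOn ℝ univ (h m)) (hz : Tendsto z atTop (𝓝 zhat))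
    (hmin : ∀ p, ∀ᶠ ℓ in atTop,
      G (z ℓ) + softplusPenalty h ℓ (z ℓ) ≤ G p + softplusPenalty h ℓ p)
    {z₀ : E} (hz₀ : ∀ m, h m z₀ < 0) {y : E} (hy : ∀ m, h m y ≤ 0) : G zhat ≤ G y := by
  refine closure_minimal (fun p hp => ?_) (isClosed_le continuous_const hG)
    (mem_closure_setOf_forall_neg hh hz₀ hy)
  exact le_of_tendsto_of_eventually_add_penalty_le hG softplusPenalty_nonneg hz (hmin p)
    (tendsto_softplusPenalty_of_forall_neg hp)

theorem stmt_9_general (n M : ℕ) (μ : ℝ) (hμ : 0 < μ)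
    (G : EuclideanSpace ℝ (Fin n) → ℝ)
    (hG : StrongConvexOn Set.univ μ G) (hGcont : Continuous G)
    (h : Fin M → EuclideanSpace ℝ (Fin n) → ℝ)
    (hconv : ∀ m, ConvexOn ℝ Set.univ (h m)) (hcont : ∀ m, Continuous (h m))
    (W : Set (EuclideanSpace ℝ (Fin n)))
    (hW : W = {z | ∀ m, h m z ≤ 0})
    (hSlater : ∃ z, ∀ m, h m z < 0)
    (g : ℝ → EuclideanSpace ℝ (Fin n) → ℝ)
    (hg : ∀ ℓ z, g ℓ z = ∑ m, Real.log (1 + Real.exp (ℓ * h m z)))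
    (zstar : EuclideanSpace ℝ (Fin n))
    (hzstar : zstar ∈ W ∧ ∀ z ∈ W, G zstar ≤ G z)
    (zℓ : ℝ → EuclideanSpace ℝ (Fin n))
    (hzℓ : ∀ ℓ : ℝ, 0 < ℓ → ∀ z, G (zℓ ℓ) + g ℓ (zℓ ℓ) ≤ G z + g ℓ z)
    (zhat : EuclideanSpace ℝ (Fin n))
    (hlim : Filter.Tendsto zℓ Filter.atTop (nhds zhat)) :
    zhat = zstar := by
  obtain ⟨z₀, hz₀⟩ := hSlater
  obtain rfl : g = softplusPenalty h := funext₂ hg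
  subst hW
  have hmin (p) : ∀ᶠ ℓ in atTop, G (zℓ ℓ) + softplusPenalty h ℓ (zℓ ℓ) ≤
      G p + softplusPenalty h ℓ p :=
    (eventually_gt_atTop 0).mono fun ℓ hℓ => hzℓ ℓ hℓ p
  have hzhat_mem : zhat ∈ {z | ∀ m, h m z ≤ 0} :=
    nonpos_of_tendsto_softplus_minimizers hGcont hcont hlim hz₀ (hmin z₀)
  have hzhat_min : IsMinOn G {z | ∀ m, h m z ≤ 0} zhat := fun y hy =>
    le_of_tendsto_softplus_minimizers hGcont hconv hlim hmin hz₀ hy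
  have hstrict : StrictConvexOn ℝ {z | ∀ m, h m z ≤ 0} G :=
    (hG.strictConvexOn hμ).subset (subset_univ _) (convex_setOf_forall_nonpos hconv)
  exact hstrict.eq_of_isMinOn hzhat_min hzstar.2 hzhat_mem hzstar.1

theorem stmt_9 (n M : ℕ) (hM : 0 < M) (μ : ℝ) (hμ : 0 < μ)
    (G : EuclideanSpace ℝ (Fin n) → ℝ)
    (hG : StrongConvexOn Set.univ μ G) (hGcont : Continuous G)
    (h : Fin M → EuclideanSpace ℝ (Fin n) → ℝ)
    (hconv : ∀ m, ConvexOn ℝ Set.univ (h m)) (hcont : ∀ m, Continuous (h m))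
    (W : Set (EuclideanSpace ℝ (Fin n)))
    (hW : W = {z | ∀ m, h m z ≤ 0})
    (hSlater : ∃ z, ∀ m, h m z < 0)
    (g : ℝ → EuclideanSpace ℝ (Fin n) → ℝ)
    (hg : ∀ ℓ z, g ℓ z = ∑ m, Real.log (1 + Real.exp (ℓ * h m z)))
    (zstar : EuclideanSpace ℝ (Fin n))
    (hzstar : zstar ∈ W ∧ ∀ z ∈ W, G zstar ≤ G z)
    (zℓ : ℝ → EuclideanSpace ℝ (Fin n))
    (hzℓ : ∀ ℓ : ℝ, 0 < ℓ → ∀ z, G (zℓ ℓ) + g ℓ (zℓ ℓ) ≤ G z + g ℓ z)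
    (zhat : EuclideanSpace ℝ (Fin n))
    (hlim : Filter.Tendsto zℓ Filter.atTop (nhds zhat)) :
    zhat = zstar :=
  stmt_9_general n M μ hμ G hG hGcont h hconv hcont W hW hSlater g hg zstar hzstar zℓ hzℓ zhat hlim
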